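/- arXiv:2004.01512 — 2 statements merged into one kernel-verified Lean document; each statement's English description precedes it below -/
import Mathlib

section
/- Let (D̃, g̃) be a statistical structure on an almost contact metric manifold (M̃, g̃, φ̃, ν) such that D̃_X(φ̃Y) - φ̃(D̃*_X Y) = g̃(Y,X)ν - g̃(Y,ν)X holds for all X, Y (with D̃* the dual connection). Then the difference tensor K̄ = D̃ - ∇̃ satisfies K̄(X, φ̃Y) = -φ̃K̄(X,Y) and the Levi-Civita connection satisfies (∇̃_X φ̃)Y = g̃(X,Y)ν - η(Y)X, so the structure is indefinite Sasakian statistical. -/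
/-- Converse: if `(D̃, g̃)` is a statistical structure on an almost contact metric
manifold such that `D̃_X(φ̃Y) - φ̃(D̃*_X Y) = g̃(Y,X)ν - g̃(Y,ν)X` (and the companion
relation with `D̃` and `D̃*` interchanged) hold, where `D̃* = 2∇̃ - D̃`, then the
difference tensor `K̄ = D̃ - ∇̃` satisfies `K̄(X, φ̃Y) = -φ̃K̄(X,Y)` and
`(∇̃_X φ̃)Y = g̃(X,Y)ν - η(Y)X`: the structure is indefinite Sasakian statistical. -/
theorem sasakian_statistical_characterization
    (V : Type*) [AddCommGroup V] [Module ℝ V]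
    (g : V →ₗ[ℝ] V →ₗ[ℝ] ℝ)
    (gsymm : ∀ X Y : V, g X Y = g Y X)
    (phi : V →ₗ[ℝ] V) (nu : V)
    (D Dstar nabla : V → V → V)
    -- the dual connection: `D̃* = 2∇̃ - D̃`
    (hdualdef : ∀ X Y : V, Dstar X Y = (2:ℝ) • nabla X Y - D X Y)
    -- the hypothesis `D̃_X(φ̃Y) - φ̃(D̃*_X Y) = g̃(Y,X)ν - g̃(Y,ν)X`
    (hmain : ∀ X Y : V,
      D X (phi Y) - phi (Dstar X Y) = g Y X • nu - g Y nu • X)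
    -- the companion relation
    (hcomp : ∀ X Y : V,
      Dstar X (phi Y) - phi (D X Y) = g Y X • nu - g Y nu • X) :
    (∀ X Y : V,
      (D X (phi Y) - nabla X (phi Y)) = -phi (D X Y - nabla X Y)) ∧
    (∀ X Y : V,
      nabla X (phi Y) - phi (nabla X Y) = g X Y • nu - g Y nu • X) := by
  refine ⟨fun X Y => ?_, fun X Y => ?_⟩ <;>
  · have h1 := hmain X Y
    have h2 := hcomp X Y
    rw [hdualdef] at h1 h2
    simp only [map_sub, map_smul] at h1 h2 ⊢
    try rw [gsymm X Y]
    first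
    | linear_combination (norm := module) ((2:ℝ)⁻¹) • h1 - ((2:ℝ)⁻¹) • h2
    | linear_combination (norm := module) ((2:ℝ)⁻¹) • h1 + ((2:ℝ)⁻¹) • h2
end

section
/- Let M be a lightlike hypersurface of a statistical manifold (M̃, g̃, D̃, D̃*) with induced connections D, D* and second fundamental forms B, B*. Then for all tangent vector fields X, Y, Z: (D_X g)(Y,Z) + (D*_X g)(Y,Z) = B(X,Y)η(Z) + B(X,Z)η(Y) + B*(X,Y)η(Z) + B*(X,Z)η(Y), where η(X) = g̃(X,N). -/
/-- For a lightlike hypersurface `M` of a statistical manifold `(M̃, g̃, D̃, D̃*)`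
with induced connections `D, D*` and second fundamental forms `B, B*` (via the
Gauss formulas `D̃_X Y = D_X Y + B(X,Y)N`, `D̃*_X Y = D*_X Y + B*(X,Y)N`), one has,
for all tangent `X, Y, Z`:
`(D_X g)(Y,Z) + (D*_X g)(Y,Z)
  = B(X,Y)η(Z) + B(X,Z)η(Y) + B*(X,Y)η(Z) + B*(X,Z)η(Y)`,
where `η(X) = g̃(X,N)`. -/
theorem induced_connections_metric_defect
    (A : Type*) [CommRing A] (Γ : Type*) [AddCommGroup Γ] [Module A Γ]
    (g : Γ →ₗ[A] Γ →ₗ[A] A)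
    (gsymm : ∀ X Y : Γ, g X Y = g Y X)
    (a : Γ → A → A)
    (H : Submodule A Γ)            -- the tangent fields of `M`
    (N : Γ)                        -- the null transversal section
    (Dt Dst : Γ → Γ → Γ)           -- ambient dual connections `D̃, D̃*`
    (D Ds : Γ → Γ → Γ)             -- induced connections
    (B Bs : Γ → Γ → A)             -- second fundamental forms
    (hdual : ∀ X Y Z : Γ, a Z (g X Y) = g (Dt Z X) Y + g X (Dst Z Y))
    (hGauss : ∀ X Y : Γ, X ∈ H → Y ∈ H → Dt X Y = D X Y + B X Y • N)
    (hGaussStar : ∀ X Y : Γ, X ∈ H → Y ∈ H → Dst X Y = Ds X Y + Bs X Y • N) :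
    ∀ X ∈ H, ∀ Y ∈ H, ∀ Z ∈ H,
      (a X (g Y Z) - g (D X Y) Z - g Y (D X Z))
        + (a X (g Y Z) - g (Ds X Y) Z - g Y (Ds X Z))
      = B X Y * g Z N + B X Z * g Y N + Bs X Y * g Z N + Bs X Z * g Y N := by
  intro X hX Y hY Z hZ
  have h1 := hdual Y Z X
  have h2 := hdual Z Y X
  simp only [hGauss X Y hX hY, hGauss X Z hX hZ, hGaussStar X Y hX hY, hGaussStar X Z hX hZ] at h1 h2
  simp only [map_add, map_smul, LinearMap.add_apply, LinearMap.smul_apply, smul_eq_mul] at h1 h2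
  have e1 : a X (g Y Z) = g (D X Y) Z + B X Y * g N Z + (g Y (Ds X Z) + Bs X Z * g Y N) := h1
  have e2 : a X (g Y Z) = g (D X Z) Y + B X Z * g N Y + (g Z (Ds X Y) + Bs X Y * g Z N) := by
    rw [gsymm Y Z]; exact h2
  rw [← gsymm Y (D X Z), gsymm Z (Ds X Y), gsymm N Y] at e2
  rw [gsymm N Z] at e1
  linear_combination e1 + e2
end
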